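/- Let ω = e^{2πi/3} and for k ∈ ℂ, k ≠ 0, let P(k) = [[ωk, ω²k, k], [ω²k², ωk², k²], [1, 1, 1]] and 𝓛(k) = diag(−ωk, −ω²k, −k). Then for every τ ∈ ℝ, the limit as k → 0 (k ≠ 0) of P(k) · exp(τ·𝓛(k)) · P(k)^{-1} exists and equals the matrix [[1, −τ, 0], [0, 1, 0], [−τ, τ²/2, 1]]; in particular k = 0 is a removable singularity of the matrix-valued function k ↦ P(k) exp(τ𝓛(k)) P(k)^{-1}. -/

import Mathlib

open Matrix Filter Topology

/-- ω = e^{2πi/3}, a primitive cube root of unity. -/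
noncomputable def ω : ℂ := Complex.exp (2 * Real.pi * Complex.I / 3)

/-- The gauge-transformation matrix P(k). -/
noncomputable def Pmat (k : ℂ) : Matrix (Fin 3) (Fin 3) ℂ :=
  !![ω * k, ω^2 * k, k;
     ω^2 * k^2, ω * k^2, k^2;
     1, 1, 1]

/-- 𝓛(k) = diag(−ωk, −ω²k, −k). -/
noncomputable def Lcal (k : ℂ) : Matrix (Fin 3) (Fin 3) ℂ :=
  Matrix.diagonal ![-(ω * k), -(ω^2 * k), -k]

/-! Although P(k) degenerates at k = 0, the conjugate P(k) 𝓛(k) P(k)⁻¹ is the polynomial matrix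
`Amat k = [[0, -1, 0], [0, 0, -k³], [-1, 0, 0]]`, so for k ≠ 0 the function equals
exp(τ · Amat k), which is continuous in k. Hence the limit is exp(τ · Amat 0), and since
Amat 0 is nilpotent of order 3 this exponential is 1 + τ Amat 0 + τ² (Amat 0)² / 2. -/

open NormedSpace Finset Nat in
theorem NormedSpace.exp_eq_sum_range_of_pow_eq_zero {𝔸 : Type*} [Ring 𝔸] [Algebra ℚ 𝔸]
    [TopologicalSpace 𝔸] [IsTopologicalRing 𝔸] {x : 𝔸} {n : ℕ} (hx : x ^ n = 0) :
    exp x = ∑ i ∈ range n, (i !⁻¹ : ℚ) • x ^ i := by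
  rw [exp_eq_tsum ℚ]
  refine tsum_eq_sum fun i hi => ?_
  rw [pow_eq_zero_of_le (not_lt.mp (mem_range.not.mp hi)) hx, smul_zero]

@[fun_prop]
theorem Matrix.continuous_exp {m 𝔸 : Type*} [Fintype m] [DecidableEq m] [NormedRing 𝔸]
    [NormedAlgebra ℚ 𝔸] [CompleteSpace 𝔸] :
    Continuous (NormedSpace.exp : Matrix m m 𝔸 → Matrix m m 𝔸) := by
  -- the completeness instance must be found before the operator-norm instances are in scope
  have h : CompleteSpace (Matrix m m 𝔸) := inferInstance
  open scoped Matrix.Norms.Operator in exact @NormedSpace.exp_continuous _ _ _ h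

theorem Matrix.mul_exp_mul_inv_of_mul_eq_mul {m 𝔸 : Type*} [Fintype m] [DecidableEq m]
    [NormedCommRing 𝔸] [NormedAlgebra ℚ 𝔸] [CompleteSpace 𝔸] {P L A : Matrix m m 𝔸}
    (hP : IsUnit P.det) (h : P * L = A * P) :
    P * NormedSpace.exp L * P⁻¹ = NormedSpace.exp A := by
  rw [← exp_conj P L ((isUnit_iff_isUnit_det P).mpr hP), h, Matrix.mul_assoc,
    mul_nonsing_inv P hP, Matrix.mul_one]

lemma isPrimitiveRoot_ω : IsPrimitiveRoot ω 3 := by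
  simpa [ω] using Complex.isPrimitiveRoot_exp 3 (by norm_num)

lemma det_Pmat (k : ℂ) : (Pmat k).det = 3 * ω * (ω - 1) * k ^ 3 := by
  simp only [Pmat, det_fin_three, of_apply, cons_val', cons_val_zero, cons_val_fin_one,
    cons_val_one, cons_val, mul_one]
  linear_combination (-(k ^ 3) * ω) * isPrimitiveRoot_ω.pow_eq_one

lemma isUnit_det_Pmat {k : ℂ} (hk : k ≠ 0) : IsUnit (Pmat k).det := by
  have hω := isPrimitiveRoot_ω
  rw [det_Pmat, isUnit_iff_ne_zero]
  simp [hω.ne_zero three_ne_zero, sub_eq_zero, hω.ne_one, hk]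

def Amat (k : ℂ) : Matrix (Fin 3) (Fin 3) ℂ :=
  !![0, -1, 0; 0, 0, -k^3; -1, 0, 0]

@[fun_prop]
lemma continuous_Amat : Continuous Amat := by
  refine continuous_matrix fun i j => ?_
  fin_cases i <;> fin_cases j <;> simp only [Amat] <;> fun_prop

lemma Pmat_mul_Lcal (k : ℂ) : Pmat k * Lcal k = Amat k * Pmat k := by
  have hω := isPrimitiveRoot_ω.pow_eq_one
  ext i j
  fin_cases i <;> fin_cases j <;>
    simp [Pmat, Amat, Lcal, Matrix.mul_apply, Fin.sum_univ_three] <;> grind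

lemma Amat_zero_pow_three : Amat 0 ^ 3 = 0 := by
  ext i j
  fin_cases i <;> fin_cases j <;>
    simp [Amat, pow_succ, Matrix.mul_apply, Fin.sum_univ_three]

lemma exp_smul_Amat_zero (τ : ℂ) :
    NormedSpace.exp (τ • Amat 0) = !![1, -τ, 0; 0, 1, 0; -τ, τ ^ 2 / 2, 1] := by
  rw [NormedSpace.exp_eq_sum_range_of_pow_eq_zero (n := 3)
    (by rw [smul_pow, Amat_zero_pow_three, smul_zero])]
  ext i j
  fin_cases i <;> fin_cases j <;>
    simp [Finset.sum_range_succ, Amat, pow_succ, Rat.smul_def]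
  ring

theorem tendsto_P_exp_Pinv (τ : ℝ) :
    Tendsto (fun k : ℂ => Pmat k * NormedSpace.exp ((τ : ℂ) • Lcal k) * (Pmat k)⁻¹)
      (𝓝[≠] (0 : ℂ))
      (𝓝 (!![1, -(τ : ℂ), 0; 0, 1, 0; -(τ : ℂ), (τ : ℂ)^2/2, 1])) := by
  have hcont : Continuous fun k : ℂ => NormedSpace.exp ((τ : ℂ) • Amat k) := by fun_prop
  rw [← exp_smul_Amat_zero]
  refine (tendsto_nhdsWithin_of_tendsto_nhds (hcont.tendsto 0)).congr' ?_
  filter_upwards [self_mem_nhdsWithin] with k hk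
  refine (mul_exp_mul_inv_of_mul_eq_mul (isUnit_det_Pmat hk) ?_).symm
  rw [Matrix.mul_smul, Pmat_mul_Lcal, Matrix.smul_mul]
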